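/- arXiv:2509.25551 — 3 statements merged into one kernel-verified Lean document; each statement's English description precedes it below -/
import Mathlib

section
/- Let 2 ≤ d ≤ n be integers. In the polynomial ring ℂ[X₁,Y₁,…,X_n,Y_n], the following identity holds: Σ_{1≤i₁<⋯<i_d≤n} (X_{i₁} − X_{i₂} − ⋯ − X_{i_d})(Y_{i₁} − Y_{i₂} − ⋯ − Y_{i_d}) = C(n−1, d−1)·Σ_{i=1}^n X_i Y_i + Σ_{1≤i,j≤n, i≠j} ( C(n−2, d−2) − 2·C(n − min(i,j) − 1, d−2) )·X_i Y_j, where C(a,b) denotes the binomial coefficient. -/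
/-!
Write a `d`-subset as `s = {i₁ < ⋯ < i_d}`. The linear form `X_{i₁} - X_{i₂} - ⋯ - X_{i_d}` is
`∑ᵢ leadSign s i • Xᵢ`, where `leadSign s` is `1` at `min s`, `-1` on the rest of `s` and `0` off
`s`, so the coefficient of `Xᵢ Yⱼ` is `∑ₛ leadSign s i * leadSign s j`. For `i = j` this counts
the `d`-sets containing `i`. For `i < j` the product is `1` if `i, j ∈ s`, except that it is `-1`
when moreover `i = min s`, i.e. when `s` lies in `[i, n)`; counting both kinds of sets gives the
binomial coefficients.
-/

open MeasureTheory ProbabilityTheory Filter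
open scoped ENNReal NNReal Topology BigOperators

noncomputable section

/-- A function `φ : S^d → ℝ` is antisymmetric if permuting its arguments multiplies it by
the sign of the permutation. -/
def Antisymmetric' {S : Type*} {d : ℕ} (φ : (Fin d → S) → ℝ) : Prop :=
  ∀ (x : Fin d → S) (π : Equiv.Perm (Fin d)), φ (x ∘ π) = (Equiv.Perm.sign π : ℤ) * φ x

open Classical in
/-- The φ-covariance of two vectors `u v : S^n`. -/
def covPhi {S : Type*} {d n : ℕ} (φ : (Fin d → S) → ℝ) (u v : Fin n → S) : ℝ :=
  (n.choose d : ℝ)⁻¹ *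
    ∑ f ∈ Finset.univ.filter (fun f : Fin d → Fin n => StrictMono f),
      φ (u ∘ f) * φ (v ∘ f)

/-- The φ-correlation of two vectors. -/
def corPhi {S : Type*} {d n : ℕ} (φ : (Fin d → S) → ℝ) (u v : Fin n → S) : ℝ :=
  covPhi φ u v / Real.sqrt (covPhi φ u u * covPhi φ v v)

/-- `phiBar φ μ x = E[φ(x, 𝒳₂, …, 𝒳_d)]` where `𝒳₂, …, 𝒳_d` are i.i.d. with law `μ`. -/
def phiBar {S : Type*} [MeasurableSpace S] {d : ℕ} (φ : (Fin d → S) → ℝ)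
    (μ : MeasureTheory.Measure S) (x : S) : ℝ :=
  ∫ y : Fin d → S, φ (fun j => if (j : ℕ) = 0 then x else y j) ∂(Measure.pi fun _ => μ)

/-- Squared Frobenius norm of a matrix. -/
def frobSq {p : ℕ} (M : Matrix (Fin p) (Fin p) ℝ) : ℝ :=
  ∑ k, ∑ l, (M k l) ^ 2

/-- Empirical spectral distribution of a (Hermitian) real matrix: the uniform probability
measure on its eigenvalues. (Junk value `0` if the matrix is not Hermitian.) -/
def ESD {p : ℕ} (M : Matrix (Fin p) (Fin p) ℝ) : MeasureTheory.Measure ℝ :=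
  if h : M.IsHermitian then
    (p : ℝ≥0∞)⁻¹ • ∑ i : Fin p, MeasureTheory.Measure.dirac (h.eigenvalues i)
  else 0

/-- The Marčenko–Pastur distribution with parameter `q ≥ 0`. -/
def MP (q : ℝ) : MeasureTheory.Measure ℝ :=
  if q = 0 then MeasureTheory.Measure.dirac 1
  else
    (MeasureTheory.volume.withDensity fun x =>
        ENNReal.ofReal
          (Set.indicator (Set.Icc ((1 - Real.sqrt q) ^ 2) ((1 + Real.sqrt q) ^ 2))
            (fun x =>
              Real.sqrt (((1 + Real.sqrt q) ^ 2 - x) * (x - (1 - Real.sqrt q) ^ 2)) /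
                (2 * Real.pi * q * x)) x))
      + (if 1 < q then ENNReal.ofReal (1 - q⁻¹) • MeasureTheory.Measure.dirac 0 else 0)

/-- `MPaff q α β` is the push-forward of `MP q` by `x ↦ α x + β`. -/
def MPaff (q α β : ℝ) : MeasureTheory.Measure ℝ :=
  (MP q).map (fun x => α * x + β)

/-- A sequence of random probability measures on ℝ (defined on varying probability spaces)
converges weakly in probability to a deterministic measure `ν`. -/
def TendstoWeaklyInProbability {Ω : ℕ → Type*} [∀ n, MeasurableSpace (Ω n)]
    (P : ∀ n, MeasureTheory.Measure (Ω n)) (μ : ∀ n, Ω n → MeasureTheory.Measure ℝ)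
    (ν : MeasureTheory.Measure ℝ) : Prop :=
  ∀ f : BoundedContinuousFunction ℝ ℝ, ∀ ε > (0 : ℝ),
    Tendsto (fun n => P n {ω | ε ≤ |(∫ x, f x ∂(μ n ω)) - ∫ x, f x ∂ν|}) atTop (𝓝 0)

section SignedSubsets

open Finset

section LeadSign

variable {α R : Type*} [LinearOrder α] [Ring R]

def leadSign (s : Finset α) (i : α) : R :=
  if i ∈ s then if ∀ x ∈ s, i ≤ x then 1 else -1 else 0

theorem leadSign_mul_self (s : Finset α) (i : α) :
    leadSign s i * leadSign s i = (if i ∈ s then 1 else 0 : R) := by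
  unfold leadSign
  split_ifs <;> simp

theorem leadSign_mul_leadSign_of_lt {i j : α} (hij : i < j) (s : Finset α) :
    leadSign s i * leadSign s j =
      (if {i, j} ⊆ s then 1 else 0 : R) - 2 * if {i, j} ⊆ s ∧ ∀ x ∈ s, i ≤ x then 1 else 0 := by
  unfold leadSign
  by_cases hi : i ∈ s
  · by_cases hj : j ∈ s
    · have hj_not_min : ¬ ∀ x ∈ s, j ≤ x := fun h => (h i hi).not_gt hij
      simp only [hi, hj, hj_not_min, insert_subset_iff, singleton_subset_iff, and_self, true_and,
        if_true, if_false]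
      split_ifs <;> norm_num
    · simp [insert_subset_iff, hj]
  · simp [insert_subset_iff, hi]

theorem leadSign_image_of_strictMono {d : ℕ} [Fintype α] {f : Fin d → α} (hf : StrictMono f)
    (j : Fin d) : leadSign (univ.image f) (f j) = (if (j : ℕ) = 0 then 1 else -1 : R) := by
  have hmin : (∀ x ∈ univ.image f, f j ≤ x) ↔ (j : ℕ) = 0 := by
    simp only [mem_image, mem_univ, true_and, forall_exists_index, forall_apply_eq_imp_iff,
      hf.le_iff_le]
    exact ⟨fun h => Nat.le_zero.mp (h ⟨0, j.pos⟩), fun h k => Fin.le_def.mpr (by omega)⟩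
  simp only [leadSign, mem_image_of_mem f (mem_univ j), if_true, hmin]

end LeadSign

open Classical in
theorem sum_strictMono_eq_sum_powersetCard {α M : Type*} [Fintype α] [LinearOrder α]
    [AddCommMonoid M] (d : ℕ) (g : Finset α → M) :
    ∑ f ∈ univ.filter (fun f : Fin d → α => StrictMono f), g (univ.image f)
      = ∑ s ∈ powersetCard d univ, g s := by
  refine sum_bij' (fun f _ => univ.image f)
    (fun s hs => s.orderEmbOfFin (mem_powersetCard.mp hs).2) (fun f hf => ?_)
    (fun s _ => by simpa using (s.orderEmbOfFin _).strictMono) (fun f hf => ?_) (fun s _ => ?_)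
    (fun _ _ => rfl)
  · rw [mem_filter] at hf
    simp [mem_powersetCard, card_image_of_injective _ hf.2.injective]
  · exact (orderEmbOfFin_unique _ (fun j => mem_image_of_mem f (mem_univ j))
      (mem_filter.mp hf).2).symm
  · apply coe_injective
    simp

theorem sum_sign_mul_eq_sum_leadSign_mul {α R : Type*} [Fintype α] [LinearOrder α] [Ring R]
    {d : ℕ} {f : Fin d → α} (hf : StrictMono f) (g : α → R) :
    ∑ j : Fin d, (if (j : ℕ) = 0 then 1 else -1) * g (f j)
      = ∑ i, leadSign (univ.image f) i * g i := by
  rw [← sum_subset (subset_univ (univ.image f)) (fun i _ hi => by simp [leadSign, hi]),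
    sum_image (fun _ _ _ _ h => hf.injective h)]
  simp only [leadSign_image_of_strictMono hf]

section Counting

variable {α R : Type*} [LinearOrder α] [Ring R] {u : Finset α} {d : ℕ}

theorem sum_leadSign_mul_self (hd : 1 ≤ d) {i : α} (hi : i ∈ u) :
    ∑ s ∈ powersetCard d u, (leadSign s i * leadSign s i : R) = ((#u - 1).choose (d - 1) : ℕ) := by
  simp_rw [leadSign_mul_self, sum_boole, ← singleton_subset_iff]
  rw [card_filter_powersetCard_subset _ _ _ (singleton_subset_iff.mpr hi) (by simpa using hd),
    card_singleton]

theorem sum_leadSign_mul_leadSign_of_lt (hd : 2 ≤ d) {i j : α} (hi : i ∈ u) (hj : j ∈ u)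
    (hij : i < j) :
    ∑ s ∈ powersetCard d u, (leadSign s i * leadSign s j : R)
      = ((#u - 2).choose (d - 2) : ℕ) - 2 * ((#{x ∈ u | i ≤ x} - 2).choose (d - 2) : ℕ) := by
  have hcard : #{i, j} = 2 := card_pair hij.ne
  have hmin : {s ∈ powersetCard d u | {i, j} ⊆ s ∧ ∀ x ∈ s, i ≤ x}
      = {s ∈ powersetCard d {x ∈ u | i ≤ x} | {i, j} ⊆ s} := by
    ext s
    simp only [mem_filter, mem_powersetCard, subset_iff]
    constructor
    · exact fun ⟨⟨hsu, hs⟩, hpair, hmin⟩ => ⟨⟨fun x hx => ⟨hsu hx, hmin x hx⟩, hs⟩, hpair⟩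
    · exact fun ⟨⟨hsu, hs⟩, hpair⟩ => ⟨⟨fun x hx => (hsu hx).1, hs⟩, hpair, fun x hx => (hsu hx).2⟩
  have hpair : {i, j} ⊆ u := by simp [insert_subset_iff, hi, hj]
  have hpair' : {i, j} ⊆ {x ∈ u | i ≤ x} := by simp [insert_subset_iff, hi, hj, hij.le]
  rw [sum_congr rfl fun s _ => leadSign_mul_leadSign_of_lt hij s, sum_sub_distrib, ← mul_sum,
    sum_boole, sum_boole, hmin, card_filter_powersetCard_subset _ _ _ hpair (hcard ▸ hd),
    card_filter_powersetCard_subset _ _ _ hpair' (hcard ▸ hd), hcard]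

end Counting

theorem sum_leadSign_mul_leadSign_of_ne {R : Type*} [CommRing R] {n d : ℕ} (hd : 2 ≤ d)
    {i j : Fin n} (hij : i ≠ j) :
    ∑ s ∈ powersetCard d univ, (leadSign s i * leadSign s j : R)
      = ((n - 2).choose (d - 2) : ℕ) - 2 * ((n - min (i : ℕ) j - 2).choose (d - 2) : ℕ) := by
  rcases hij.lt_or_gt with hlt | hgt
  · rw [sum_leadSign_mul_leadSign_of_lt hd (mem_univ _) (mem_univ _) hlt,
      min_eq_left (Fin.le_def.mp hlt.le), filter_le_eq_Ici]
    simp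
  · simp_rw [mul_comm (leadSign _ i : R)]
    rw [sum_leadSign_mul_leadSign_of_lt hd (mem_univ _) (mem_univ _) hgt,
      min_eq_right (Fin.le_def.mp hgt.le), filter_le_eq_Ici]
    simp

theorem sum_sum_eq_sum_diag_add_sum_ne {ι M : Type*} [Fintype ι] [DecidableEq ι]
    [AddCommMonoid M] (F : ι → ι → M) :
    ∑ i, ∑ j, F i j
      = ∑ i, F i i + ∑ ij ∈ univ.filter (fun ij : ι × ι => ij.1 ≠ ij.2), F ij.1 ij.2 := by
  rw [← Fintype.sum_prod_type', ← sum_filter_add_sum_filter_not univ (fun ij => ij.1 = ij.2),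
    ← univ_product_univ, ← diag_eq_filter, sum_diag]

open Classical in
theorem sum_strictMono_signedSum_mul_signedSum {R : Type*} [CommRing R] {n d : ℕ} (hd : 2 ≤ d)
    (x y : Fin n → R) :
    ∑ f ∈ univ.filter (fun f : Fin d → Fin n => StrictMono f),
        (∑ j : Fin d, (if (j : ℕ) = 0 then 1 else -1) * x (f j)) *
        (∑ j : Fin d, (if (j : ℕ) = 0 then 1 else -1) * y (f j))
      = ((n - 1).choose (d - 1) : R) * ∑ i, x i * y i
        + ∑ ij ∈ univ.filter (fun ij : Fin n × Fin n => ij.1 ≠ ij.2),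
            (((n - 2).choose (d - 2) : R) - 2 * ((n - min (ij.1 : ℕ) ij.2 - 2).choose (d - 2) : R))
              * x ij.1 * y ij.2 := by
  calc _ = ∑ s ∈ powersetCard d univ,
          (∑ i, leadSign s i * x i) * (∑ j, leadSign s j * y j) := by
        rw [← sum_strictMono_eq_sum_powersetCard]
        refine sum_congr rfl fun f hf => ?_
        rw [sum_sign_mul_eq_sum_leadSign_mul (mem_filter.mp hf).2,
          sum_sign_mul_eq_sum_leadSign_mul (mem_filter.mp hf).2]
    _ = ∑ i, ∑ j, (∑ s ∈ powersetCard d univ, leadSign s i * leadSign s j) * x i * y j := by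
        simp_rw [sum_mul_sum, sum_mul]
        rw [sum_comm]
        refine sum_congr rfl fun i _ => ?_
        rw [sum_comm]
        refine sum_congr rfl fun j _ => sum_congr rfl fun s _ => by ring
    _ = _ := by
        rw [sum_sum_eq_sum_diag_add_sum_ne, mul_sum]
        congr 1
        · refine sum_congr rfl fun i _ => ?_
          rw [sum_leadSign_mul_self (by omega) (mem_univ i), card_univ, Fintype.card_fin, mul_assoc]
        · refine sum_congr rfl fun ij hij => ?_
          rw [sum_leadSign_mul_leadSign_of_ne hd (mem_filter.mp hij).2]

end SignedSubsets

open MvPolynomial in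
open Classical in
/-- `Xᵢ` is `X (Sum.inl i)` and `Yᵢ` is `X (Sum.inr i)`; indices are 0-based, so the paper's
`C(n - min(i,j) - 1, d - 2)` reads `(n - min i j - 2).choose (d - 2)`. -/
theorem polynomial_identity_general
    (n d : ℕ) (hd : 2 ≤ d) :
    (∑ f ∈ Finset.univ.filter (fun f : Fin d → Fin n => StrictMono f),
        (∑ j : Fin d, (if (j : ℕ) = 0 then (1 : MvPolynomial (Fin n ⊕ Fin n) ℂ) else -1) *
            X (Sum.inl (f j))) *
        (∑ j : Fin d, (if (j : ℕ) = 0 then (1 : MvPolynomial (Fin n ⊕ Fin n) ℂ) else -1) *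
            X (Sum.inr (f j))))
      = C (((n - 1).choose (d - 1) : ℂ)) * ∑ i : Fin n, X (Sum.inl i) * X (Sum.inr i)
        + ∑ ij ∈ Finset.univ.filter (fun ij : Fin n × Fin n => ij.1 ≠ ij.2),
            C ((((n - 2).choose (d - 2) : ℕ) : ℂ)
                - 2 * (((n - min (ij.1 : ℕ) (ij.2 : ℕ) - 2).choose (d - 2) : ℕ) : ℂ))
              * X (Sum.inl ij.1) * X (Sum.inr ij.2) := by
  rw [sum_strictMono_signedSum_mul_signedSum hd (fun i => X (Sum.inl i))
    (fun i => X (Sum.inr i))]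
  simp only [map_sub, map_mul, map_natCast, map_ofNat]

open MvPolynomial in
open Classical in
/-- the key polynomial identity, in `ℂ[X₁, Y₁, …, Xₙ, Yₙ]` (the `Xᵢ` are indexed
by `Sum.inl i` and the `Yᵢ` by `Sum.inr i`). -/
theorem polynomial_identity
    (n d : ℕ) (hd : 2 ≤ d) (hdn : d ≤ n) :
    (∑ f ∈ Finset.univ.filter (fun f : Fin d → Fin n => StrictMono f),
        (∑ j : Fin d, (if (j : ℕ) = 0 then (1 : MvPolynomial (Fin n ⊕ Fin n) ℂ) else -1) *
            X (Sum.inl (f j))) *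
        (∑ j : Fin d, (if (j : ℕ) = 0 then (1 : MvPolynomial (Fin n ⊕ Fin n) ℂ) else -1) *
            X (Sum.inr (f j))))
      = C (((n - 1).choose (d - 1) : ℂ)) * ∑ i : Fin n, X (Sum.inl i) * X (Sum.inr i)
        + ∑ ij ∈ Finset.univ.filter (fun ij : Fin n × Fin n => ij.1 ≠ ij.2),
            C ((((n - 2).choose (d - 2) : ℕ) : ℂ)
                - 2 * (((n - min (ij.1 : ℕ) (ij.2 : ℕ) - 2).choose (d - 2) : ℕ) : ℂ))
              * X (Sum.inl ij.1) * X (Sum.inr ij.2) :=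
  polynomial_identity_general n d hd

end
end

section
/- Let M = [x_{k,t}] (1 ≤ k ≤ p, 1 ≤ t ≤ n) be a p×n random matrix whose entries are independent centered real random variables in L⁴ with E[x_{k,t}²] = 1 for all k, t. Then E[ ‖ (1/n) M Mᵀ − I_p ‖_F² ] ≤ (p/n)·( p + max_{k,t} E[x_{k,t}⁴] − 2 ). -/
open MeasureTheory ProbabilityTheory Filter
open scoped ENNReal NNReal Topology BigOperators

noncomputable section

/-! Entry `(k, l)` of `n⁻¹ M Mᵀ - I` is `n⁻¹ ∑ₜ (Zₜ - E Zₜ)` with `Zₜ = x_{k,t} x_{l,t}`, since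
`E Zₜ = δ_{kl}`. The `Zₜ` are pairwise independent in `t`, so the entry has second moment
`n⁻² ∑ₜ Var Zₜ`, where `Var Zₜ = E x_{k,t}⁴ - 1` if `k = l` and `Var Zₜ = E x_{k,t}² E x_{l,t}² = 1`
otherwise. Hence each of the `p (p - 1)` off-diagonal entries contributes `1 / n` and each of the
`p` diagonal ones at most `(max E x⁴ - 1) / n`. -/

instance : ENNReal.HolderTriple 4 4 2 where
  inv_add_inv_eq_inv := by
    rw [show (4 : ℝ≥0∞) = 2 * 2 by norm_num, ENNReal.mul_inv (by simp) (by simp),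
      ← div_eq_mul_inv, ENNReal.add_halves]

section Independence

variable {Ω : Type*} [MeasurableSpace Ω] {P : Measure Ω} {X Y : Ω → ℝ}

lemma ProbabilityTheory.IndepFun.sq (h : X ⟂ᵢ[P] Y) :
    (fun ω => X ω ^ 2) ⟂ᵢ[P] (fun ω => Y ω ^ 2) :=
  h.comp (measurable_id.pow_const 2) (measurable_id.pow_const 2)

lemma ProbabilityTheory.IndepFun.memLp_two_mul (h : X ⟂ᵢ[P] Y) (hX : MemLp X 2 P)
    (hY : MemLp Y 2 P) : MemLp (fun ω => X ω * Y ω) 2 P := by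
  refine (memLp_two_iff_integrable_sq (hX.1.mul hY.1)).2 ?_
  show Integrable (fun ω => (X ω * Y ω) ^ 2) P
  simp_rw [mul_pow]
  exact h.sq.integrable_mul hX.integrable_sq hY.integrable_sq

lemma ProbabilityTheory.IndepFun.variance_mul [IsProbabilityMeasure P] (h : X ⟂ᵢ[P] Y)
    (hX : MemLp X 2 P) (hY : MemLp Y 2 P) :
    Var[fun ω => X ω * Y ω; P] = (∫ ω, X ω ^ 2 ∂P) * (∫ ω, Y ω ^ 2 ∂P) - (P[X] * P[Y]) ^ 2 := by
  rw [variance_eq_sub (h.memLp_two_mul hX hY)]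
  simp only [Pi.pow_apply, mul_pow]
  rw [h.sq.integral_fun_mul_eq_mul_integral (hX.1.pow 2) (hY.1.pow 2),
    h.integral_fun_mul_eq_mul_integral hX.1 hY.1, mul_pow]

lemma integral_sq_sum_sub_integral_eq_sum_variance [IsFiniteMeasure P] {ι : Type*}
    {Z : ι → Ω → ℝ} {s : Finset ι} (hZ : ∀ i ∈ s, MemLp (Z i) 2 P)
    (h : Set.Pairwise s fun i j => Z i ⟂ᵢ[P] Z j) :
    ∫ ω, (∑ i ∈ s, (Z i ω - P[Z i])) ^ 2 ∂P = ∑ i ∈ s, Var[Z i; P] := by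
  rw [← IndepFun.variance_sum hZ h, variance_eq_integral (memLp_finsetSum' s hZ).aemeasurable]
  simp only [Finset.sum_apply, Finset.sum_sub_distrib]
  rw [integral_finsetSum s fun i hi => (hZ i hi).integrable one_le_two]

lemma integral_mul_eq_ite_of_iIndepFun {κ : Type*} [DecidableEq κ] {X : κ → Ω → ℝ}
    (hindep : iIndepFun X P)
    (hX : ∀ i, AEStronglyMeasurable (X i) P) (hcent : ∀ i, ∫ ω, X i ω ∂P = 0)
    (hvar : ∀ i, ∫ ω, X i ω ^ 2 ∂P = 1) (i j : κ) :
    ∫ ω, X i ω * X j ω ∂P = if i = j then 1 else 0 := by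
  split_ifs with hij
  · simpa only [hij, sq] using hvar j
  · rw [(hindep.indepFun hij).integral_fun_mul_eq_mul_integral (hX i) (hX j), hcent i, zero_mul]

end Independence

section WhiteNoise

variable {Ω : Type*} [MeasurableSpace Ω] {P : Measure Ω} [IsProbabilityMeasure P]
  {ι τ : Type*} [DecidableEq ι] {x : ι → τ → Ω → ℝ}

lemma variance_mul_eq_ite
    (hindep : iIndepFun (fun (kt : ι × τ) ω => x kt.1 kt.2 ω) P)
    (hL4 : ∀ k t, MemLp (x k t) 4 P) (hcent : ∀ k t, ∫ ω, x k t ω ∂P = 0)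
    (hvar : ∀ k t, ∫ ω, (x k t ω) ^ 2 ∂P = 1) (k l : ι) (t : τ) :
    Var[fun ω => x k t ω * x l t ω; P] = if k = l then ∫ ω, x k t ω ^ 4 ∂P - 1 else 1 := by
  split_ifs with hkl
  · subst hkl
    rw [variance_eq_sub ((hL4 k t).mul' (hL4 k t))]
    simp only [Pi.pow_apply, ← sq, ← pow_mul, hvar]
    norm_num
  · have hne : ((k, t) : ι × τ) ≠ (l, t) := by simp [hkl]
    have hL2 : ∀ k t, MemLp (x k t) 2 P := fun k t => (hL4 k t).mono_exponent (by norm_num)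
    rw [(hindep.indepFun hne).variance_mul (hL2 k t) (hL2 l t), hvar, hvar, hcent, hcent]
    norm_num

lemma integral_sq_inv_card_mul_sum_sub_eq [Fintype τ] [Nonempty τ]
    (hindep : iIndepFun (fun (kt : ι × τ) ω => x kt.1 kt.2 ω) P)
    (hL4 : ∀ k t, MemLp (x k t) 4 P) (hcent : ∀ k t, ∫ ω, x k t ω ∂P = 0)
    (hvar : ∀ k t, ∫ ω, (x k t ω) ^ 2 ∂P = 1) (k l : ι) :
    ∫ ω, ((Fintype.card τ : ℝ)⁻¹ * ∑ t, x k t ω * x l t ω - if k = l then 1 else 0) ^ 2 ∂P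
      = (Fintype.card τ : ℝ)⁻¹ ^ 2 * ∑ t, Var[fun ω => x k t ω * x l t ω; P] := by
  have hL : ∀ kt : ι × τ, AEStronglyMeasurable (x kt.1 kt.2) P := fun kt => (hL4 kt.1 kt.2).1
  have hmean (t : τ) : ∫ ω, x k t ω * x l t ω ∂P = if k = l then 1 else 0 := by
    classical
    simpa using integral_mul_eq_ite_of_iIndepFun hindep hL (fun kt => hcent kt.1 kt.2)
      (fun kt => hvar kt.1 kt.2) (k, t) (l, t)
  have hcentered (ω : Ω) :
      (Fintype.card τ : ℝ)⁻¹ * ∑ t, x k t ω * x l t ω - (if k = l then 1 else 0)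
        = (Fintype.card τ : ℝ)⁻¹ * ∑ t, (x k t ω * x l t ω - ∫ ω, x k t ω * x l t ω ∂P) := by
    have : (Fintype.card τ : ℝ) ≠ 0 := by positivity
    simp only [hmean, Finset.sum_sub_distrib, Finset.sum_const, Finset.card_univ, nsmul_eq_mul]
    field_simp
  simp_rw [hcentered, mul_pow]
  rw [integral_const_mul, integral_sq_sum_sub_integral_eq_sum_variance
    (Z := fun t ω => x k t ω * x l t ω)]
  · exact fun t _ => (hL4 l t).mul' (hL4 k t)
  · intro t _ s _ hts
    exact hindep.indepFun_mul_mul₀ (fun kt => (hL kt).aemeasurable) (k, t) (l, t) (k, s) (l, s)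
      (by simp [hts]) (by simp [hts]) (by simp [hts]) (by simp [hts])

lemma integral_sum_sum_sq_inv_card_mul_sum_sub_eq [Fintype ι] [Fintype τ] [Nonempty τ]
    (hindep : iIndepFun (fun (kt : ι × τ) ω => x kt.1 kt.2 ω) P)
    (hL4 : ∀ k t, MemLp (x k t) 4 P) (hcent : ∀ k t, ∫ ω, x k t ω ∂P = 0)
    (hvar : ∀ k t, ∫ ω, (x k t ω) ^ 2 ∂P = 1) :
    ∫ ω, ∑ k, ∑ l,
        ((Fintype.card τ : ℝ)⁻¹ * ∑ t, x k t ω * x l t ω - if k = l then 1 else 0) ^ 2 ∂P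
      = ∑ k, ∑ l, (Fintype.card τ : ℝ)⁻¹ ^ 2 * ∑ t, Var[fun ω => x k t ω * x l t ω; P] := by
  have hentry (k l : ι) : Integrable (fun ω =>
      ((Fintype.card τ : ℝ)⁻¹ * ∑ t, x k t ω * x l t ω - if k = l then 1 else 0) ^ 2) P :=
    (((memLp_finsetSum _ fun t _ => (hL4 l t).mul' (hL4 k t)).const_mul _).sub
      (memLp_const _)).integrable_sq
  rw [integral_finsetSum _ fun k _ => integrable_finsetSum _ fun l _ => hentry k l]
  simp only [integral_finsetSum _ fun l _ => hentry _ l,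
    integral_sq_inv_card_mul_sum_sub_eq hindep hL4 hcent hvar]

end WhiteNoise

lemma frobSq_smul_mul_transpose_sub_one {p : ℕ} {τ : Type*} [Fintype τ] (c : ℝ)
    (A : Matrix (Fin p) τ ℝ) :
    frobSq (c • (A * A.transpose) - 1)
      = ∑ k, ∑ l, (c * ∑ t, A k t * A l t - if k = l then 1 else 0) ^ 2 := by
  simp [frobSq, Matrix.mul_apply, Matrix.one_apply]

theorem white_noise_covariance_frobenius_le_general
    (pp n : ℕ) (hn : 0 < n)
    (Ω : Type) [MeasurableSpace Ω] (P : Measure Ω) [IsProbabilityMeasure P]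
    (x : Fin pp → Fin n → Ω → ℝ)
    (hindep : iIndepFun
      (fun (kt : Fin pp × Fin n) ω => x kt.1 kt.2 ω) P)
    (hL4 : ∀ k t, MemLp (x k t) 4 P)
    (hcent : ∀ k t, ∫ ω, x k t ω ∂P = 0)
    (hvar : ∀ k t, ∫ ω, (x k t ω) ^ 2 ∂P = 1) :
    (∫ ω, frobSq ((n : ℝ)⁻¹ •
        (Matrix.of (fun k t => x k t ω) * Matrix.transpose (Matrix.of (fun k t => x k t ω))) - 1) ∂P)
      ≤ ((pp : ℝ) / n) *
          ((pp : ℝ) + (⨆ kt : Fin pp × Fin n, ∫ ω, (x kt.1 kt.2 ω) ^ 4 ∂P) - 2) := by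
  have : Nonempty (Fin n) := Fin.pos_iff_nonempty.mp hn
  set M := ⨆ kt : Fin pp × Fin n, ∫ ω, (x kt.1 kt.2 ω) ^ 4 ∂P
  have hM (k : Fin pp) (t : Fin n) : ∫ ω, x k t ω ^ 4 ∂P ≤ M :=
    le_ciSup (f := fun kt : Fin pp × Fin n => ∫ ω, x kt.1 kt.2 ω ^ 4 ∂P)
      (Set.finite_range _).bddAbove (k, t)
  simp only [frobSq_smul_mul_transpose_sub_one, Matrix.of_apply]
  calc _ = ∑ k, ∑ l, (n : ℝ)⁻¹ ^ 2 * ∑ t, Var[fun ω => x k t ω * x l t ω; P] := by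
        simpa using integral_sum_sum_sq_inv_card_mul_sum_sub_eq hindep hL4 hcent hvar
    _ ≤ ∑ k : Fin pp, ∑ l : Fin pp,
          (n : ℝ)⁻¹ ^ 2 * ∑ _t : Fin n, (1 + if k = l then M - 2 else 0) := by
        gcongr with k _ l _ t _
        rw [variance_mul_eq_ite hindep hL4 hcent hvar]
        split_ifs
        · linarith [hM k t]
        · simp
    _ = ((pp : ℝ) / n) * ((pp : ℝ) + M - 2) := by
        simp only [Finset.sum_const, Finset.card_univ, Fintype.card_fin, nsmul_eq_mul,
          ← Finset.mul_sum, Finset.sum_add_distrib, Finset.sum_ite_eq, Finset.mem_univ, if_true]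
        field_simp
        ring

/-- the expected squared Frobenius distance of the empirical covariance matrix
of a white noise to the identity. -/
theorem white_noise_covariance_frobenius_le
    (pp n : ℕ) (hp : 0 < pp) (hn : 0 < n)
    (Ω : Type) [MeasurableSpace Ω] (P : Measure Ω) [IsProbabilityMeasure P]
    (x : Fin pp → Fin n → Ω → ℝ)
    (hmeas : ∀ k t, Measurable (x k t))
    (hindep : iIndepFun
      (fun (kt : Fin pp × Fin n) ω => x kt.1 kt.2 ω) P)
    (hL4 : ∀ k t, MemLp (x k t) 4 P)
    (hcent : ∀ k t, ∫ ω, x k t ω ∂P = 0)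
    (hvar : ∀ k t, ∫ ω, (x k t ω) ^ 2 ∂P = 1) :
    (∫ ω, frobSq ((n : ℝ)⁻¹ •
        (Matrix.of (fun k t => x k t ω) * Matrix.transpose (Matrix.of (fun k t => x k t ω))) - 1) ∂P)
      ≤ ((pp : ℝ) / n) *
          ((pp : ℝ) + (⨆ kt : Fin pp × Fin n, ∫ ω, (x kt.1 kt.2 ω) ^ 4 ∂P) - 2) :=
  white_noise_covariance_frobenius_le_general pp n hn Ω P x hindep hL4 hcent hvar

end
end

section
/- Let d ≥ 2, let S be a measurable space, let X₁,…,X_d be i.i.d. S-valued random variables, and let φ : S^d → ℝ be an antisymmetric measurable function with φ(X₁,…,X_d) integrable. Set φ̄(x) = E[φ(x, X₂, …, X_d)]. Then the conditional expectations satisfy: E[ φ(X₁,…,X_d) | X₁ ] = φ̄(X₁) almost surely, and for every l ∈ {2,…,d}, E[ φ(X₁,…,X_d) | X_l ] = −φ̄(X_l) almost surely. Consequently E[φ(X₁,…,X_d)] = E[φ̄(X₁)] = 0. -/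
open MeasureTheory ProbabilityTheory Filter
open scoped ENNReal NNReal Topology BigOperators

noncomputable section

/-! Write `Y = (X₁, …, X_d)`; its law is `μ^d`. Swapping coordinates `1` and `l` preserves `μ^d`
and flips the sign of `φ`, so `E[φ(Y); X_l ∈ B] = -E[φ(Y); X₁ ∈ B]` for `l ≠ 1`, and `E[φ(Y)] = 0`.
Overwriting the first coordinate by an independent `μ`-distributed point also preserves `μ^d`, so
by Fubini `E[φ(Y); X₁ ∈ B] = ∫_B φ̄ dμ = E[φ̄(X₁); X₁ ∈ B]`. These are the defining identities of
the conditional expectations given `X_l`. -/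

theorem MeasureTheory.MeasurePreserving.setIntegral_preimage {α β E : Type*}
    [MeasurableSpace α] [MeasurableSpace β] [NormedAddCommGroup E] [NormedSpace ℝ E]
    {μ : Measure α} {ν : Measure β} {f : α → β} (hf : MeasurePreserving f μ ν) {g : β → E}
    (hg : AEStronglyMeasurable g ν) {s : Set β} (hs : MeasurableSet s) :
    ∫ x in f ⁻¹' s, g (f x) ∂μ = ∫ y in s, g y ∂ν := by
  rw [← hf.map_eq] at hg ⊢
  exact (setIntegral_map hs hg hf.measurable.aemeasurable).symm

section ProductMeasure

variable {S : Type*} [MeasurableSpace S] {ι : Type*} [Fintype ι] (μ : Measure S)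

theorem measurePreserving_arrowCongr'_refl [SigmaFinite μ] (σ : Equiv.Perm ι) :
    MeasurePreserving (MeasurableEquiv.arrowCongr' σ (MeasurableEquiv.refl S))
      (Measure.pi fun _ : ι => μ) (Measure.pi fun _ : ι => μ) :=
  measurePreserving_arrowCongr' _ _ _ _ fun _ => MeasurePreserving.id μ

variable [DecidableEq ι] [IsProbabilityMeasure μ]

theorem measurePreserving_update (i : ι) :
    MeasurePreserving (fun p : S × (ι → S) => Function.update p.2 i p.1)
      (μ.prod (Measure.pi fun _ : ι => μ)) (Measure.pi fun _ : ι => μ) := by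
  have hmeas : Measurable fun p : S × (ι → S) => Function.update p.2 i p.1 := by fun_prop
  refine ⟨hmeas, (Measure.pi_eq fun s hs => ?_).symm⟩
  have hpre : (fun p : S × (ι → S) => Function.update p.2 i p.1) ⁻¹' Set.univ.pi s =
      s i ×ˢ Set.univ.pi (Function.update s i Set.univ) := by
    ext ⟨x, y⟩
    simp only [Set.mem_preimage, Set.mem_univ_pi, Set.mem_prod]
    rw [Function.forall_update_iff (p := fun j z => z ∈ s j),
      Function.forall_update_iff (p := fun j t => y j ∈ t)]
    simp
  rw [Measure.map_apply hmeas (.univ_pi hs), hpre, Measure.prod_prod, Measure.pi_pi]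
  simp only [Function.apply_update (fun _ => μ), measure_univ]
  rw [Finset.prod_update_of_mem (Finset.mem_univ i), one_mul, ← Finset.compl_eq_univ_sdiff,
    Fintype.prod_eq_mul_prod_compl i]

theorem setIntegral_preimage_eval_eq_integral_update {f : (ι → S) → ℝ}
    (hf : Integrable f (Measure.pi fun _ => μ)) (i : ι) {B : Set S} (hB : MeasurableSet B) :
    ∫ y in Function.eval i ⁻¹' B, f y ∂(Measure.pi fun _ => μ) =
      ∫ x in B, ∫ y, f (Function.update y i x) ∂(Measure.pi fun _ => μ) ∂μ := by
  have hU := measurePreserving_update μ i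
  have hpre : (fun p : S × (ι → S) => Function.update p.2 i p.1) ⁻¹' (Function.eval i ⁻¹' B) =
      B ×ˢ Set.univ := by
    ext; simp
  rw [← hU.setIntegral_preimage hf.aestronglyMeasurable (measurable_pi_apply i hB), hpre,
    setIntegral_prod (fun p : S × (ι → S) => f (Function.update p.2 i p.1))
      (hU.integrable_comp_of_integrable hf).integrableOn, Measure.restrict_univ]

end ProductMeasure

namespace Antisymmetric'

variable {S : Type*} {d : ℕ} {φ : (Fin d → S) → ℝ}

theorem comp_swap (hφ : Antisymmetric' φ) {i j : Fin d} (hij : i ≠ j) (x : Fin d → S) :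
    φ (x ∘ Equiv.swap i j) = -φ x := by
  rw [hφ x, Equiv.Perm.sign_swap hij]
  simp

variable [MeasurableSpace S] (μ : Measure S) [SigmaFinite μ]

theorem setIntegral_preimage_eval_eq_neg (hφ : Antisymmetric' φ) {i j : Fin d} (hij : i ≠ j)
    (B : Set S) :
    ∫ y in Function.eval j ⁻¹' B, φ y ∂(Measure.pi fun _ => μ) =
      -∫ y in Function.eval i ⁻¹' B, φ y ∂(Measure.pi fun _ => μ) := by
  set e := MeasurableEquiv.arrowCongr' (Equiv.swap i j).symm (MeasurableEquiv.refl S)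
  have he : ∀ y, e y = y ∘ Equiv.swap i j := fun _ => rfl
  have hpre : e ⁻¹' (Function.eval j ⁻¹' B) = Function.eval i ⁻¹' B := by
    ext y; simp [he]
  calc ∫ y in Function.eval j ⁻¹' B, φ y ∂(Measure.pi fun _ => μ)
      = ∫ y in e ⁻¹' (Function.eval j ⁻¹' B), φ (e y) ∂(Measure.pi fun _ => μ) :=
        ((measurePreserving_arrowCongr'_refl μ _).setIntegral_preimage_emb
          e.measurableEmbedding _ _).symm
    _ = ∫ y in Function.eval i ⁻¹' B, -φ y ∂(Measure.pi fun _ => μ) := by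
        simp only [hpre, he, hφ.comp_swap hij]
    _ = _ := integral_neg _

theorem integral_pi_eq_zero (hφ : Antisymmetric' φ) (hd : 2 ≤ d) :
    ∫ y, φ y ∂(Measure.pi fun _ => μ) = 0 := by
  have h := hφ.setIntegral_preimage_eval_eq_neg μ (i := ⟨0, by omega⟩) (j := ⟨1, hd⟩)
    (by simp [Fin.ext_iff]) Set.univ
  simp only [Set.preimage_univ, Measure.restrict_univ] at h
  linarith

end Antisymmetric'

section PhiBar

variable {S : Type*} [MeasurableSpace S] {d : ℕ} (φ : (Fin d → S) → ℝ) (μ : Measure S)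

theorem phiBar_eq_integral_update (hd : 0 < d) :
    phiBar φ μ = fun x => ∫ y, φ (Function.update y ⟨0, hd⟩ x) ∂(Measure.pi fun _ => μ) := by
  ext x
  rw [phiBar]
  congr with y
  congr with j
  simp [Function.update_apply, Fin.ext_iff]

theorem stronglyMeasurable_phiBar [SigmaFinite μ] (hφ : Measurable φ) :
    StronglyMeasurable (phiBar φ μ) := by
  refine StronglyMeasurable.integral_prod_right'
    (f := fun p : S × (Fin d → S) => φ fun j => if (j : ℕ) = 0 then p.1 else p.2 j)
    (hφ.comp (measurable_pi_lambda _ fun j => ?_)).stronglyMeasurable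
  by_cases h : (j : ℕ) = 0 <;> simp only [h, if_true, if_false] <;> fun_prop

variable [IsProbabilityMeasure μ]

theorem integrable_phiBar (hd : 0 < d) (hφ : Integrable φ (Measure.pi fun _ => μ)) :
    Integrable (phiBar φ μ) μ := by
  rw [phiBar_eq_integral_update φ μ hd]
  exact ((measurePreserving_update μ _).integrable_comp_of_integrable hφ).integral_prod_left

theorem setIntegral_phiBar (hd : 0 < d) (hφ : Integrable φ (Measure.pi fun _ => μ)) {B : Set S}
    (hB : MeasurableSet B) :
    ∫ x in B, phiBar φ μ x ∂μ =
      ∫ y in Function.eval ⟨0, hd⟩ ⁻¹' B, φ y ∂(Measure.pi fun _ => μ) := by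
  rw [phiBar_eq_integral_update φ μ hd]
  exact (setIntegral_preimage_eval_eq_integral_update μ hφ _ hB).symm

theorem Antisymmetric'.integral_phiBar_eq_zero (hφa : Antisymmetric' φ) (hd : 2 ≤ d)
    (hφ : Integrable φ (Measure.pi fun _ => μ)) :
    ∫ x, phiBar φ μ x ∂μ = 0 := by
  have h := setIntegral_phiBar φ μ (by omega) hφ .univ
  simp only [Measure.restrict_univ, Set.preimage_univ] at h
  rw [h, hφa.integral_pi_eq_zero μ hd]

end PhiBar

theorem condExp_comp_comap_ae_eq {Ω E S : Type*} {mΩ : MeasurableSpace Ω} [MeasurableSpace E]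
    [mS : MeasurableSpace S] {P : Measure Ω} [IsFiniteMeasure P] {ν : Measure E} {Y : Ω → E}
    (hY : MeasurePreserving Y P ν) {Z : E → S} (hZ : Measurable Z) {f : E → ℝ}
    (hf : Integrable f ν) {g : S → ℝ} (hg : StronglyMeasurable g) (hgi : Integrable g (ν.map Z))
    (h : ∀ B, MeasurableSet B → ∫ y in Z ⁻¹' B, f y ∂ν = ∫ x in B, g x ∂(ν.map Z)) :
    P[f ∘ Y | mS.comap (Z ∘ Y)] =ᵐ[P] g ∘ Z ∘ Y := by
  have hZY : MeasurePreserving (Z ∘ Y) P (ν.map Z) := (MeasurePreserving.mk hZ rfl).comp hY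
  refine (ae_eq_condExp_of_forall_setIntegral_eq hZY.measurable.comap_le
    ((hY.integrable_comp hf.aestronglyMeasurable).mpr hf)
    (fun _ _ _ => ((hZY.integrable_comp hg.aestronglyMeasurable).mpr hgi).integrableOn) ?_
    (hg.comp_measurable (comap_measurable _)).aestronglyMeasurable).symm
  rintro _ ⟨B, hB, rfl⟩ _
  calc ∫ ω in (Z ∘ Y) ⁻¹' B, g ((Z ∘ Y) ω) ∂P
      = ∫ y in Z ⁻¹' B, f y ∂ν := by
        rw [hZY.setIntegral_preimage hg.aestronglyMeasurable hB, h B hB]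
    _ = ∫ ω in Y ⁻¹' (Z ⁻¹' B), f (Y ω) ∂P :=
        (hY.setIntegral_preimage hf.aestronglyMeasurable (hZ hB)).symm

/-- conditional expectations of `φ(X₁, …, X_d)` given one coordinate. -/
theorem condexp_phi_eq_phiBar
    (d : ℕ) (hd : 2 ≤ d)
    (S : Type) [mS : MeasurableSpace S]
    (Ω : Type) [mΩ : MeasurableSpace Ω] (P : Measure Ω) [IsProbabilityMeasure P]
    (X : Fin d → Ω → S) (hXmeas : ∀ i, Measurable (X i))
    (μ : Measure S) [IsProbabilityMeasure μ]
    (hlaw : ∀ i, Measure.map (X i) P = μ)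
    (hindep : iIndepFun X P)
    (φ : (Fin d → S) → ℝ) (hφanti : Antisymmetric' φ) (hφmeas : Measurable φ)
    (hint : Integrable (fun ω => φ (fun j => X j ω)) P) :
    (∀ l : Fin d, (l : ℕ) = 0 →
      P[(fun ω => φ (fun j => X j ω)) | MeasurableSpace.comap (X l) mS]
        =ᵐ[P] fun ω => phiBar φ μ (X l ω)) ∧
    (∀ l : Fin d, (l : ℕ) ≠ 0 →
      P[(fun ω => φ (fun j => X j ω)) | MeasurableSpace.comap (X l) mS]
        =ᵐ[P] fun ω => -phiBar φ μ (X l ω)) ∧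
    (∫ ω, φ (fun j => X j ω) ∂P = 0) ∧ (∫ s, phiBar φ μ s ∂μ = 0) := by
  have hd₀ : 0 < d := by omega
  set ν := Measure.pi fun _ : Fin d => μ
  have hY : MeasurePreserving (fun ω j => X j ω) P ν :=
    ⟨by fun_prop, by
      simpa only [hlaw] using hindep.map_fun_eq_pi_map fun i => (hXmeas i).aemeasurable⟩
  have hφν : Integrable φ ν := (hY.integrable_comp hφmeas.aestronglyMeasurable).mp hint
  have heval : ∀ l : Fin d, ν.map (Function.eval l) = μ := fun l =>
    (measurePreserving_eval _ l).map_eq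
  have hbar : StronglyMeasurable (phiBar φ μ) := stronglyMeasurable_phiBar φ μ hφmeas
  have hbarμ : Integrable (phiBar φ μ) μ := integrable_phiBar φ μ hd₀ hφν
  refine ⟨fun l hl => ?_, fun l hl => ?_, ?_, hφanti.integral_phiBar_eq_zero φ μ hd hφν⟩
  · obtain rfl : l = ⟨0, hd₀⟩ := Fin.ext hl
    refine condExp_comp_comap_ae_eq hY (measurable_pi_apply _) hφν hbar (by rwa [heval])
      fun B hB => ?_
    rw [heval, setIntegral_phiBar φ μ hd₀ hφν hB]
  · have hl₀ : (⟨0, hd₀⟩ : Fin d) ≠ l := fun h => hl (h ▸ rfl)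
    refine condExp_comp_comap_ae_eq hY (measurable_pi_apply _) hφν hbar.neg
      (by rwa [heval, integrable_neg_iff]) fun B hB => ?_
    rw [heval, integral_neg', setIntegral_phiBar φ μ hd₀ hφν hB,
      hφanti.setIntegral_preimage_eval_eq_neg μ hl₀]
  · rw [← integral_map (φ := fun ω j => X j ω) hY.measurable.aemeasurable
      hφmeas.aestronglyMeasurable, hY.map_eq, hφanti.integral_pi_eq_zero μ hd]
end
end
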